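/- For n ≥ 2, let G_n be the graph obtained from the disjoint union of n paths (x_i, a_i, b_i, y_i) of length 3 by identifying all x_i into a single vertex x and all y_i into a single vertex y, and then attaching a pendant vertex z' to every vertex z ∉ {x, y}. Then G_n has exactly 2^n minimal x,y-separators, namely all sets {c_1, …, c_n} with c_i ∈ {a_i, b_i} for each i. -/
import Mathlib


open SimpleGraph Finset BigOperators

variable {V : Type*} [Fintype V] [DecidableEq V]

/-- `S` is a connected dominating set of `G`: every vertex is in `S` or has a neighbor in `S`,
and any two vertices of `S` are joined by a walk staying inside `S`
(i.e. `S` induces a connected subgraph). -/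
def SimpleGraph.IsCDSet (G : SimpleGraph V) (S : Finset V) : Prop :=
  (∀ v : V, v ∈ S ∨ ∃ u ∈ S, G.Adj u v) ∧
  ∀ u ∈ S, ∀ v ∈ S, ∃ p : G.Walk u v, ∀ x ∈ p.support, x ∈ S

/-- `(w, t)` is a connected-domishold structure of `G`. -/
def SimpleGraph.IsCDStructure (G : SimpleGraph V) (w : V → ℝ) (t : ℝ) : Prop :=
  (∀ v, 0 ≤ w v) ∧ 0 ≤ t ∧ ∀ S : Finset V, (t ≤ ∑ x ∈ S, w x) ↔ G.IsCDSet S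

/-- `G` is connected-domishold. -/
def SimpleGraph.ConnectedDomishold (G : SimpleGraph V) : Prop :=
  ∃ (w : V → ℝ) (t : ℝ), G.IsCDStructure w t

/-- `S` is a cutset of `G`: `G - S` is disconnected, i.e. there exist two vertices outside `S`
such that every walk between them meets `S`. -/
def SimpleGraph.IsCutset (G : SimpleGraph V) (S : Finset V) : Prop :=
  ∃ u v : V, u ∉ S ∧ v ∉ S ∧ u ≠ v ∧ ∀ p : G.Walk u v, ∃ x ∈ p.support, x ∈ S

/-- `S` is a minimal cutset of `G`. -/
def SimpleGraph.IsMinCutset (G : SimpleGraph V) (S : Finset V) : Prop :=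
  G.IsCutset S ∧ ∀ S' ⊆ S, G.IsCutset S' → S' = S

/-- A hypergraph on vertex set `V`, given by its hyperedge predicate `Eh`, is threshold. -/
def HypThreshold (Eh : Finset V → Prop) : Prop :=
  ∃ (w : V → ℝ) (t : ℝ), (∀ v, 0 ≤ w v) ∧ 0 ≤ t ∧
    ∀ X : Finset V, (∑ v ∈ X, w v ≤ t) ↔ ∀ e, Eh e → ¬ e ⊆ X

def HypOneSperner (Eh : Finset V → Prop) : Prop :=
  ∀ e f, Eh e → Eh f → e ≠ f → min (e \ f).card (f \ e).card = 1

def HypTwoSummable (Eh : Finset V → Prop) : Prop :=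
  ∃ A₁ A₂ B₁ B₂ : Finset V,
    (∃ e, Eh e ∧ e ⊆ A₁) ∧ (∃ e, Eh e ∧ e ⊆ A₂) ∧
    (∀ e, Eh e → ¬ e ⊆ B₁) ∧ (∀ e, Eh e → ¬ e ⊆ B₂) ∧
    ∀ v : V, ((if v ∈ A₁ then 1 else 0) + (if v ∈ A₂ then 1 else 0) : ℕ)
           = (if v ∈ B₁ then 1 else 0) + (if v ∈ B₂ then 1 else 0)

/-- `S` is a `u,v`-separator in `G`: `u, v ∉ S` and every `u`-`v` walk meets `S`. -/
def SimpleGraph.IsSeparator {W : Type*} (G : SimpleGraph W) (u v : W) (S : Finset W) : Prop :=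
  u ∉ S ∧ v ∉ S ∧ ∀ p : G.Walk u v, ∃ x ∈ p.support, x ∈ S

/-- `S` is a minimal `u,v`-separator. -/
def SimpleGraph.IsMinSeparator {W : Type*} (G : SimpleGraph W) (u v : W) (S : Finset W) :
    Prop :=
  G.IsSeparator u v S ∧ ∀ S' ⊆ S, G.IsSeparator u v S' → S' = S

/-- Vertex set of the graph `G_n`: `Sum.inl 0 = x`, `Sum.inl 1 = y`,
`Sum.inr (i, 0, 0) = a_i`, `Sum.inr (i, 1, 0) = b_i`, and `Sum.inr (i, j, 1)` is the pendant
vertex attached to `Sum.inr (i, j, 0)`. -/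
abbrev GnV (n : ℕ) := Fin 2 ⊕ (Fin n × Fin 2 × Fin 2)

/-- The graph `G_n`: obtained from the disjoint union of `n` paths `(x_i, a_i, b_i, y_i)` by
identifying all `x_i` into `x` and all `y_i` into `y`, and attaching a pendant vertex to every
vertex other than `x, y`. -/
def Gn (n : ℕ) : SimpleGraph (GnV n) :=
  SimpleGraph.fromRel (fun p q =>
    (∃ i : Fin n, p = Sum.inl 0 ∧ q = Sum.inr (i, 0, 0)) ∨
    (∃ i : Fin n, p = Sum.inr (i, 0, 0) ∧ q = Sum.inr (i, 1, 0)) ∨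
    (∃ i : Fin n, p = Sum.inr (i, 1, 0) ∧ q = Sum.inl 1) ∨
    (∃ (i : Fin n) (j : Fin 2), p = Sum.inr (i, j, 0) ∧ q = Sum.inr (i, j, 1)))


namespace GnAux

variable {n : ℕ}

def Tc (n : ℕ) (c : Fin n → Fin 2) : Finset (GnV n) :=
  Finset.image (fun i : Fin n => (Sum.inr (i, c i, 0) : GnV n)) Finset.univ

lemma mem_Tc {c : Fin n → Fin 2} {v : GnV n} :
    v ∈ Tc n c ↔ ∃ i, v = Sum.inr (i, c i, 0) := by
  simp only [Tc, Finset.mem_image, Finset.mem_univ, true_and]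
  exact ⟨fun ⟨i, h⟩ => ⟨i, h.symm⟩, fun ⟨i, h⟩ => ⟨i, h.symm⟩⟩

def fside (c : Fin n → Fin 2) : GnV n → Bool
  | Sum.inl k => decide (k = 1)
  | Sum.inr (i, _, _) => decide (c i = 0)

lemma rel_edge {c : Fin n → Fin 2} {u v : GnV n}
    (h : (∃ i : Fin n, u = Sum.inl 0 ∧ v = Sum.inr (i, 0, 0)) ∨
    (∃ i : Fin n, u = Sum.inr (i, 0, 0) ∧ v = Sum.inr (i, 1, 0)) ∨
    (∃ i : Fin n, u = Sum.inr (i, 1, 0) ∧ v = Sum.inl 1) ∨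
    (∃ (i : Fin n) (j : Fin 2), u = Sum.inr (i, j, 0) ∧ v = Sum.inr (i, j, 1)))
    (hu : ∀ i, u ≠ Sum.inr (i, c i, 0)) (hv : ∀ i, v ≠ Sum.inr (i, c i, 0)) :
    fside c u = fside c v := by
  rcases h with ⟨i, rfl, rfl⟩ | ⟨i, rfl, rfl⟩ | ⟨i, rfl, rfl⟩ | ⟨i, j, rfl, rfl⟩
  · have hci : c i ≠ 0 := fun hc => hv i (by rw [hc])
    simp [fside, hci]
  · have h2 : c i = 0 ∨ c i = 1 := by omega
    rcases h2 with h2 | h2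
    · exact absurd (by rw [h2]) (hu i)
    · exact absurd (by rw [h2]) (hv i)
  · have hci : c i = 0 := by
      have h2 : c i = 0 ∨ c i = 1 := by omega
      rcases h2 with h2 | h2
      · exact h2
      · exact absurd (by rw [h2]) (hu i)
    simp [fside, hci]
  · simp [fside]

lemma adj_edge {c : Fin n → Fin 2} {u v : GnV n} (h : (Gn n).Adj u v)
    (hu : u ∉ Tc n c) (hv : v ∉ Tc n c) : fside c u = fside c v := by
  rw [Gn, SimpleGraph.fromRel_adj] at h
  rw [mem_Tc] at hu hv
  push_neg at hu hv
  rcases h with ⟨-, h | h⟩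
  · exact rel_edge h hu hv
  · exact (rel_edge h hv hu).symm

lemma walk_const {c : Fin n → Fin 2} {u v : GnV n} (p : (Gn n).Walk u v)
    (h : ∀ x ∈ p.support, x ∉ Tc n c) : fside c u = fside c v := by
  induction p with
  | nil => rfl
  | cons hadj q ih =>
      rename_i a b d
      have h1 : a ∉ Tc n c := h a (by simp)
      have h2 : b ∉ Tc n c := h b (by simp [SimpleGraph.Walk.support_cons,
        SimpleGraph.Walk.start_mem_support])
      have h3 : ∀ x ∈ q.support, x ∉ Tc n c := fun x hx =>
        h x (by simp [SimpleGraph.Walk.support_cons, hx])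
      exact (adj_edge hadj h1 h2).trans (ih h3)

lemma Tc_sep (c : Fin n → Fin 2) :
    (Gn n).IsSeparator (Sum.inl 0) (Sum.inl 1) (Tc n c) := by
  refine ⟨by simp [mem_Tc], by simp [mem_Tc], ?_⟩
  intro p
  by_contra h
  push_neg at h
  have := walk_const p h
  simp [fside] at this

lemma adj_xa (i : Fin n) : (Gn n).Adj (Sum.inl 0) (Sum.inr (i, 0, 0)) := by
  rw [Gn, SimpleGraph.fromRel_adj]
  exact ⟨by simp, Or.inl (Or.inl ⟨i, rfl, rfl⟩)⟩

lemma adj_ab (i : Fin n) : (Gn n).Adj (Sum.inr (i, 0, 0)) (Sum.inr (i, 1, 0)) := by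
  rw [Gn, SimpleGraph.fromRel_adj]
  refine ⟨by simp [Prod.ext_iff], Or.inl (Or.inr (Or.inl ⟨i, rfl, rfl⟩))⟩

lemma adj_by (i : Fin n) : (Gn n).Adj (Sum.inr (i, 1, 0)) (Sum.inl 1) := by
  rw [Gn, SimpleGraph.fromRel_adj]
  exact ⟨by simp, Or.inl (Or.inr (Or.inr (Or.inl ⟨i, rfl, rfl⟩)))⟩

def P (i : Fin n) : (Gn n).Walk (Sum.inl 0) (Sum.inl 1) :=
  SimpleGraph.Walk.cons (adj_xa i) (SimpleGraph.Walk.cons (adj_ab i)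
    (SimpleGraph.Walk.cons (adj_by i) SimpleGraph.Walk.nil))

lemma support_P (i : Fin n) :
    (P i).support = [Sum.inl 0, Sum.inr (i, 0, 0), Sum.inr (i, 1, 0), Sum.inl 1] := by
  simp [P]

lemma sep_mem {S : Finset (GnV n)}
    (hS : (Gn n).IsSeparator (Sum.inl 0) (Sum.inl 1) S) (i : Fin n) :
    Sum.inr (i, 0, 0) ∈ S ∨ Sum.inr (i, 1, 0) ∈ S := by
  obtain ⟨z, hz, hzS⟩ := hS.2.2 (P i)
  rw [support_P] at hz
  simp only [List.mem_cons] at hz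
  rcases hz with rfl | rfl | rfl | rfl | h
  · exact absurd hzS hS.1
  · exact Or.inl hzS
  · exact Or.inr hzS
  · exact absurd hzS hS.2.1
  · simp at h

lemma Tc_min (c : Fin n → Fin 2) :
    (Gn n).IsMinSeparator (Sum.inl 0) (Sum.inl 1) (Tc n c) := by
  refine ⟨Tc_sep c, ?_⟩
  intro S' hsub hsep
  refine Finset.Subset.antisymm hsub ?_
  intro v hv
  rw [mem_Tc] at hv
  obtain ⟨i, rfl⟩ := hv
  by_contra hnot
  obtain ⟨z, hz, hzS⟩ := hsep.2.2 (P i)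
  rw [support_P] at hz
  have hsubT : ∀ w ∈ S', w ∈ Tc n c := fun w hw => hsub hw
  simp only [List.mem_cons] at hz
  rcases hz with rfl | rfl | rfl | rfl | h
  · exact hsep.1 hzS
  · obtain ⟨j, hj⟩ := mem_Tc.mp (hsubT _ hzS)
    have h1 := Sum.inr.inj hj
    have h2 : i = j := (Prod.ext_iff.mp h1).1
    have h3 : (0 : Fin 2) = c j := (Prod.ext_iff.mp (Prod.ext_iff.mp h1).2).1
    subst h2
    exact hnot (by rw [← h3]; exact hzS)
  · obtain ⟨j, hj⟩ := mem_Tc.mp (hsubT _ hzS)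
    have h1 := Sum.inr.inj hj
    have h2 : i = j := (Prod.ext_iff.mp h1).1
    have h3 : (1 : Fin 2) = c j := (Prod.ext_iff.mp (Prod.ext_iff.mp h1).2).1
    subst h2
    exact hnot (by rw [← h3]; exact hzS)
  · exact hsep.2.1 hzS
  · simp at h

lemma Tc_injective : Function.Injective (Tc n) := by
  intro c c' h
  funext i
  have hm : (Sum.inr (i, c i, 0) : GnV n) ∈ Tc n c' := by
    rw [← h, mem_Tc]; exact ⟨i, rfl⟩
  rw [mem_Tc] at hm
  obtain ⟨j, hj⟩ := hm
  have h1 := Sum.inr.inj hj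
  have h2 : i = j := (Prod.ext_iff.mp h1).1
  have h3 : c i = c' j := (Prod.ext_iff.mp (Prod.ext_iff.mp h1).2).1
  rw [h3, ← h2]

end GnAux

/-- For `n ≥ 2`, the minimal `x,y`-separators of `G_n` are exactly the `2^n` sets
`{c_1, …, c_n}` with `c_i ∈ {a_i, b_i}` for each `i`. -/
theorem Gn_minSeparators (n : ℕ) (hn : 2 ≤ n) :
    (∀ S : Finset (GnV n),
      (Gn n).IsMinSeparator (Sum.inl 0) (Sum.inl 1) S ↔
        ∃ c : Fin n → Fin 2,
          S = Finset.image (fun i : Fin n => (Sum.inr (i, c i, 0) : GnV n)) Finset.univ) ∧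
    {S : Finset (GnV n) | (Gn n).IsMinSeparator (Sum.inl 0) (Sum.inl 1) S}.ncard = 2 ^ n := by
  have part1 : ∀ S : Finset (GnV n),
      (Gn n).IsMinSeparator (Sum.inl 0) (Sum.inl 1) S ↔
        ∃ c : Fin n → Fin 2,
          S = Finset.image (fun i : Fin n => (Sum.inr (i, c i, 0) : GnV n)) Finset.univ := by
    intro S
    constructor
    · intro hmin
      classical
      set c : Fin n → Fin 2 := fun i => if (Sum.inr (i, 0, 0) : GnV n) ∈ S then 0 else 1
        with hc
      have hsub : GnAux.Tc n c ⊆ S := by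
        intro v hv
        rw [GnAux.mem_Tc] at hv
        obtain ⟨i, rfl⟩ := hv
        by_cases h : (Sum.inr (i, 0, 0) : GnV n) ∈ S
        · have : c i = 0 := by simp only [hc]; exact if_pos h
          rw [this]; exact h
        · have hci : c i = 1 := by simp only [hc]; exact if_neg h
          rcases GnAux.sep_mem hmin.1 i with h' | h'
          · exact absurd h' h
          · rw [hci]; exact h'
      have heq := hmin.2 (GnAux.Tc n c) hsub (GnAux.Tc_sep c)
      exact ⟨c, heq.symm⟩
    · rintro ⟨c, rfl⟩
      exact GnAux.Tc_min c
  refine ⟨part1, ?_⟩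
  have hset : {S : Finset (GnV n) | (Gn n).IsMinSeparator (Sum.inl 0) (Sum.inl 1) S}
      = Set.range (GnAux.Tc n) := by
    ext S
    rw [Set.mem_setOf_eq, part1 S]
    constructor
    · rintro ⟨c, rfl⟩; exact ⟨c, rfl⟩
    · rintro ⟨c, rfl⟩; exact ⟨c, rfl⟩
  rw [hset, Set.ncard_eq_toFinset_card', Set.toFinset_range,
    Finset.card_image_of_injective _ GnAux.Tc_injective]
  simp
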